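/- Suppose F is continuous and 0 < F(y) < 1 for all y ∈ (0,1). Let α ∈ (0,1), x ∈ (0,1), and assume n ≥ l_α² / (F(x)(1−F(x))). Let m > 1 be an integer such that |B_m(σ²(F);x) − F(x)(1−F(x))| ≤ F(x)(1−F(x))/l_α² and |B_m(F;x) − F(x)| ≤ √(F(x)(1−F(x)))·l_α/√n, where B_m(σ²(F);x) = Σ_{k=0}^m F(k/m)(1−F(k/m)) p_{m,k}(x). Then P( |B_m(Y_n;x) − F(x)| ≥ (2l_α + 1/l_α)·√(F(x)(1−F(x)))/√n ) ≤ α. -/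

import Mathlib

/-!
With `Z_r = B_m(1{X_r ≤ ·}; x)` one has `B_m(Y_n; x) = (1/n) Σ_r Z_r`, where the `Z_r` are
independent, `[0,1]`-valued, with mean `B_m(F; x)` and, by Jensen's inequality for the Bernstein
weights, variance at most `B_m(F(1-F); x) ≤ σ²(1 + 1/l_α²)`, `σ² = F(x)(1-F(x))`. A Chernoff
bound built on `e^s ≤ 1 + s + 3s²/4` (`|s| ≤ 1`) gives Bernstein's inequality
`P(|Σ Z_r - n μ| ≥ n ε) ≤ 2 exp(-n ε² / (3 v))`; for `ε = (l_α + 1/l_α) σ / √n` the exponent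
is `(l_α² + 1)/3 = log(2/α) + 2/3`. The bias hypothesis absorbs the remaining `l_α σ / √n`.
-/

open Set Finset MeasureTheory ProbabilityTheory

/-- Bernstein basis polynomial `p_{m,k}(x) = C(m,k) x^k (1-x)^{m-k}`. -/
noncomputable def bern (m k : ℕ) (x : ℝ) : ℝ :=
  (m.choose k : ℝ) * x ^ k * (1 - x) ^ (m - k)

/-- The `m`-th Bernstein polynomial of `f`. -/
noncomputable def Bpoly (m : ℕ) (f : ℝ → ℝ) (x : ℝ) : ℝ :=
  ∑ k ∈ Finset.range (m + 1), f ((k : ℝ) / m) * bern m k x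

/-- Empirical distribution function `Y_n(x) = (1/n) Σ_r 1{X_r ≤ x}`. -/
noncomputable def empY {Ω : Type*} (n : ℕ) (X : Fin n → Ω → ℝ) (x : ℝ) (ω : Ω) : ℝ :=
  (1 / n : ℝ) * ∑ r, (if X r ω ≤ x then (1 : ℝ) else 0)

/-- Random Bernstein polynomial `B_m(Y_n;x)`, as a function of `x` for each `ω`. -/
noncomputable def BY {Ω : Type*} (m n : ℕ) (X : Fin n → Ω → ℝ) (ω : Ω) (x : ℝ) : ℝ :=
  ∑ k ∈ Finset.range (m + 1), empY n X ((k : ℝ) / m) ω * bern m k x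

/-- `l_α = √(3 log(2 e^{1/3} / α))`. -/
noncomputable def lAlpha (α : ℝ) : ℝ :=
  Real.sqrt (3 * Real.log (2 * Real.exp (1 / 3) / α))

open Real

lemma Real.exp_le_one_add_add_three_div_four_mul_sq {s : ℝ} (hs : |s| ≤ 1) :
    exp s ≤ 1 + s + 3 / 4 * s ^ 2 := by
  have h := Real.exp_bound hs two_pos
  have htaylor : ∑ k ∈ Finset.range 2, s ^ k / k.factorial = 1 + s := by
    simp [Finset.sum_range_succ]
  norm_num [htaylor, Nat.factorial, sq_abs] at h
  linarith [(abs_le.mp h).2]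

section Concentration

variable {Ω : Type*} [MeasurableSpace Ω] {P : Measure Ω} [IsProbabilityMeasure P]

lemma mgf_le_exp_of_mem_Icc {Y : Ω → ℝ} (hY : Measurable Y) (hbd : ∀ ω, Y ω ∈ Icc (0 : ℝ) 1)
    {t : ℝ} (ht : t ∈ Icc (0 : ℝ) 1) :
    mgf Y P t ≤ exp (t * P[Y] + 3 / 4 * t ^ 2 * Var[Y; P]) := by
  set c := P[Y]
  have hYint : Integrable Y P := .of_mem_Icc 0 1 hY.aemeasurable (ae_of_all _ hbd)
  have hc : c ∈ Icc (0 : ℝ) 1 :=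
    ⟨integral_nonneg fun ω => (hbd ω).1, by
      simpa using integral_mono hYint (integrable_const 1) fun ω => (hbd ω).2⟩
  have hdev : ∀ ω, |Y ω - c| ≤ 1 := fun ω =>
    abs_le.2 ⟨by linarith [(hbd ω).1, hc.2], by linarith [(hbd ω).2, hc.1]⟩
  have hsq : Integrable (fun ω => (Y ω - c) ^ 2) P :=
    (memLp_of_bounded (a := -1) (b := 1) (ae_of_all _ fun ω => abs_le.1 (hdev ω))
      (hY.sub_const c).aestronglyMeasurable 2).integrable_sq
  have hpt : ∀ ω, exp (t * Y ω) ≤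
      exp (t * c) * (1 + t * (Y ω - c) + 3 / 4 * t ^ 2 * (Y ω - c) ^ 2) := fun ω => by
    have hs : |t * (Y ω - c)| ≤ 1 := by
      rw [abs_mul, abs_of_nonneg ht.1]
      exact mul_le_one₀ ht.2 (abs_nonneg _) (hdev ω)
    calc exp (t * Y ω) = exp (t * c) * exp (t * (Y ω - c)) := by rw [← exp_add]; ring_nf
      _ ≤ _ := by
        gcongr
        linarith [Real.exp_le_one_add_add_three_div_four_mul_sq hs]
  have hint : ∫ ω, (1 + t * (Y ω - c) + 3 / 4 * t ^ 2 * (Y ω - c) ^ 2) ∂P =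
      1 + 3 / 4 * t ^ 2 * Var[Y; P] := by
    have hcentered : ∫ ω, (Y ω - c) ∂P = 0 := by
      rw [integral_sub hYint (integrable_const c)]
      simp [c]
    rw [integral_add (by fun_prop) (by fun_prop), integral_add (by fun_prop) (by fun_prop),
      integral_const_mul, integral_const_mul, hcentered, variance_eq_integral hY.aemeasurable]
    simp [c]
  calc mgf Y P t = ∫ ω, exp (t * Y ω) ∂P := rfl
    _ ≤ ∫ ω, exp (t * c) * (1 + t * (Y ω - c) + 3 / 4 * t ^ 2 * (Y ω - c) ^ 2) ∂P :=
        integral_mono_of_nonneg (ae_of_all _ fun ω => (exp_pos _).le)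
          ((((integrable_const 1).add ((hYint.sub (integrable_const c)).const_mul t)).add
            (hsq.const_mul _)).const_mul _) (ae_of_all _ hpt)
    _ = exp (t * c) * (1 + 3 / 4 * t ^ 2 * Var[Y; P]) := by rw [integral_const_mul, hint]
    _ ≤ exp (t * c) * exp (3 / 4 * t ^ 2 * Var[Y; P]) := by
        gcongr
        linarith [add_one_le_exp (3 / 4 * t ^ 2 * Var[Y; P])]
    _ = _ := (exp_add _ _).symm

variable {ι : Type*} [Fintype ι] {Y : ι → Ω → ℝ}

lemma measureReal_sum_ge_le_exp (hY : ∀ i, Measurable (Y i)) (hindep : iIndepFun Y P)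
    (hbd : ∀ i ω, Y i ω ∈ Icc (0 : ℝ) 1) {μ v t : ℝ} (hμ : ∀ i, P[Y i] = μ)
    (hv : ∀ i, Var[Y i; P] ≤ v) (ht : t ∈ Icc (0 : ℝ) 1) (ε : ℝ) :
    P.real {ω | Fintype.card ι * (μ + ε) ≤ ∑ i, Y i ω} ≤
      exp (Fintype.card ι * (3 / 4 * t ^ 2 * v - t * ε)) := by
  have hmgf : ∀ i, mgf (Y i) P t ≤ exp (t * μ + 3 / 4 * t ^ 2 * v) := fun i =>
    (mgf_le_exp_of_mem_Icc (hY i) (hbd i) ht).trans <| exp_le_exp.2 <| by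
      rw [hμ i]
      gcongr
      exact hv i
  have hint : ∀ i ∈ (univ : Finset ι), Integrable (fun ω => exp (t * Y i ω)) P := fun i _ =>
    .of_mem_Icc 0 (exp t) (by fun_prop) <| ae_of_all _ fun ω =>
      ⟨(exp_pos _).le, exp_le_exp.2 (mul_le_of_le_one_right ht.1 (hbd i ω).2)⟩
  calc P.real {ω | Fintype.card ι * (μ + ε) ≤ ∑ i, Y i ω}
      = P.real {ω | Fintype.card ι * (μ + ε) ≤ (∑ i, Y i) ω} := by simp only [Finset.sum_apply]
    _ ≤ exp (-t * (Fintype.card ι * (μ + ε))) * mgf (∑ i, Y i) P t :=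
        measure_ge_le_exp_mul_mgf _ ht.1 (hindep.integrable_exp_mul_sum hY hint)
    _ = exp (-t * (Fintype.card ι * (μ + ε))) * ∏ i, mgf (Y i) P t := by
        rw [hindep.mgf_sum hY]
    _ ≤ exp (-t * (Fintype.card ι * (μ + ε))) * ∏ _i : ι, exp (t * μ + 3 / 4 * t ^ 2 * v) := by
        gcongr with i
        · exact fun _ _ => mgf_nonneg
        · exact hmgf i
    _ = exp (Fintype.card ι * (3 / 4 * t ^ 2 * v - t * ε)) := by
        rw [prod_const, card_univ, ← exp_nat_mul, ← exp_add]
        ring_nf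

/-- Bernstein's inequality. -/
lemma measureReal_abs_sum_sub_ge_le (hY : ∀ i, Measurable (Y i)) (hindep : iIndepFun Y P)
    (hbd : ∀ i ω, Y i ω ∈ Icc (0 : ℝ) 1) {μ v ε : ℝ} (hμ : ∀ i, P[Y i] = μ)
    (hv : ∀ i, Var[Y i; P] ≤ v) (hv0 : 0 < v) (hε : ε ∈ Icc 0 (3 / 2 * v)) :
    P.real {ω | Fintype.card ι * ε ≤ |∑ i, Y i ω - Fintype.card ι * μ|} ≤
      2 * exp (-(Fintype.card ι * ε ^ 2 / (3 * v))) := by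
  -- the minimiser of `3/4 t² v - t ε`
  set t := 2 * ε / (3 * v)
  have ht : t ∈ Icc (0 : ℝ) 1 :=
    ⟨div_nonneg (by linarith [hε.1]) (by positivity),
      (div_le_one (by positivity)).2 (by linarith [hε.2])⟩
  have hexponent : (Fintype.card ι : ℝ) * (3 / 4 * t ^ 2 * v - t * ε) =
      -(Fintype.card ι * ε ^ 2 / (3 * v)) := by
    simp only [t]
    field_simp
    ring
  have upper := measureReal_sum_ge_le_exp hY hindep hbd hμ hv ht ε
  have lower := measureReal_sum_ge_le_exp (Y := fun i ω => 1 - Y i ω)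
    (fun i => measurable_const.sub (hY i))
    (hindep.comp (fun _ y => 1 - y) fun _ => measurable_const.sub measurable_id)
    (fun i ω => ⟨by linarith [(hbd i ω).2], by linarith [(hbd i ω).1]⟩) (μ := 1 - μ)
    (fun i => by
      rw [integral_sub (integrable_const 1)
        (.of_mem_Icc 0 1 (hY i).aemeasurable (ae_of_all _ (hbd i))), hμ i]
      simp)
    (fun i => (variance_const_sub (hY i).aestronglyMeasurable 1).trans_le (hv i)) ht ε
  rw [hexponent] at upper lower
  calc P.real {ω | Fintype.card ι * ε ≤ |∑ i, Y i ω - Fintype.card ι * μ|}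
      ≤ P.real ({ω | Fintype.card ι * (μ + ε) ≤ ∑ i, Y i ω} ∪
          {ω | Fintype.card ι * (1 - μ + ε) ≤ ∑ i, (1 - Y i ω)}) := by
        refine measureReal_mono fun ω hω => ?_
        have hsum : ∑ i, (1 - Y i ω) = Fintype.card ι - ∑ i, Y i ω := by simp [sum_sub_distrib]
        simp only [Set.mem_ofPred_eq, Set.mem_union, hsum] at hω ⊢
        rcases le_abs'.1 hω with h | h
        · right; linarith
        · left; linarith
    _ ≤ _ := measureReal_union_le _ _
    _ ≤ _ := by linarith

end Concentration

noncomputable def diracCDF (a z : ℝ) : ℝ := if a ≤ z then 1 else 0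

lemma diracCDF_mem_Icc (a z : ℝ) : diracCDF a z ∈ Icc (0 : ℝ) 1 := by
  unfold diracCDF
  split_ifs <;> norm_num

lemma measurable_diracCDF (z : ℝ) : Measurable fun a => diracCDF a z :=
  Measurable.ite measurableSet_Iic measurable_const measurable_const

section Bernstein

variable {m : ℕ} {x : ℝ}

lemma bern_nonneg (hx : x ∈ Icc (0 : ℝ) 1) (k : ℕ) : 0 ≤ bern m k x := by
  have := hx.1
  have := sub_nonneg.2 hx.2
  unfold bern
  positivity

lemma sum_bern (m : ℕ) (x : ℝ) : ∑ k ∈ range (m + 1), bern m k x = 1 := by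
  have h := (add_pow x (1 - x) m).symm
  rw [add_sub_cancel, one_pow] at h
  rw [← h]
  exact sum_congr rfl fun k _ => by unfold bern; ring

lemma Bpoly_const (c : ℝ) : Bpoly m (fun _ => c) x = c := by
  rw [Bpoly, ← mul_sum, sum_bern, mul_one]

lemma Bpoly_sub (f g : ℝ → ℝ) : Bpoly m (fun y => f y - g y) x = Bpoly m f x - Bpoly m g x := by
  simp only [Bpoly, sub_mul, sum_sub_distrib]

lemma Bpoly_mono (hx : x ∈ Icc (0 : ℝ) 1) {f g : ℝ → ℝ} (h : ∀ y, f y ≤ g y) :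
    Bpoly m f x ≤ Bpoly m g x :=
  sum_le_sum fun k _ => mul_le_mul_of_nonneg_right (h _) (bern_nonneg hx k)

lemma Bpoly_mem_Icc (hx : x ∈ Icc (0 : ℝ) 1) {f : ℝ → ℝ} (hf : ∀ y, f y ∈ Icc (0 : ℝ) 1) :
    Bpoly m f x ∈ Icc (0 : ℝ) 1 := by
  constructor
  · simpa [Bpoly_const] using Bpoly_mono (m := m) hx fun y => (hf y).1
  · simpa [Bpoly_const] using Bpoly_mono (m := m) hx fun y => (hf y).2

lemma sq_Bpoly_le (hx : x ∈ Icc (0 : ℝ) 1) (f : ℝ → ℝ) :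
    Bpoly m f x ^ 2 ≤ Bpoly m (fun y => f y ^ 2) x := by
  have := (even_two.convexOn_pow (𝕜 := ℝ)).map_sum_le (t := range (m + 1))
    (w := fun k => bern m k x) (p := fun k => f (k / m)) (fun k _ => bern_nonneg hx k)
    (sum_bern m x) (fun _ _ => mem_univ _)
  simpa only [Bpoly, smul_eq_mul, mul_comm] using this

lemma measurable_Bpoly_diracCDF (m : ℕ) (x : ℝ) : Measurable fun a => Bpoly m (diracCDF a) x :=
  Finset.measurable_sum _ fun _ _ => (measurable_diracCDF _).mul_const _

lemma BY_eq_sum_div {Ω : Type*} (n : ℕ) (X : Fin n → Ω → ℝ) (ω : Ω) :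
    BY m n X ω x = (∑ r, Bpoly m (diracCDF (X r ω)) x) / n := by
  simp only [BY, empY, Bpoly, diracCDF]
  rw [sum_comm, sum_div]
  refine sum_congr rfl fun k _ => ?_
  rw [← sum_mul]
  ring

variable {Ω : Type*} [MeasurableSpace Ω] {P : Measure Ω} {G : ℝ → Ω → ℝ}

lemma integrable_Bpoly (hG : ∀ y, Integrable (G y) P) :
    Integrable (fun ω => Bpoly m (fun y => G y ω) x) P :=
  integrable_finsetSum _ fun _ _ => (hG _).mul_const _

lemma integral_Bpoly (hG : ∀ y, Integrable (G y) P) :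
    ∫ ω, Bpoly m (fun y => G y ω) x ∂P = Bpoly m (fun y => ∫ ω, G y ω ∂P) x := by
  simp only [Bpoly]
  rw [integral_finsetSum _ fun _ _ => (hG _).mul_const _]
  simp only [integral_mul_const]

end Bernstein

section DistributionFunction

variable {Ω : Type*} [MeasurableSpace Ω] {P : Measure Ω} {ξ : Ω → ℝ} {F : ℝ → ℝ} {m : ℕ} {x : ℝ}

lemma integral_diracCDF (hξ : Measurable ξ) (y : ℝ) :
    ∫ ω, diracCDF (ξ ω) y ∂P = P.real {ω | ξ ω ≤ y} := by
  have hs : MeasurableSet {ω | ξ ω ≤ y} := hξ measurableSet_Iic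
  rw [← integral_indicator_one hs]
  congr 1 with ω

variable [IsProbabilityMeasure P]

lemma integrable_diracCDF (hξ : Measurable ξ) (y : ℝ) :
    Integrable (fun ω => diracCDF (ξ ω) y) P :=
  .of_mem_Icc 0 1 ((measurable_diracCDF y).comp hξ).aemeasurable
    (ae_of_all _ fun _ => diracCDF_mem_Icc _ _)

lemma integral_Bpoly_diracCDF (hξ : Measurable ξ)
    (hcdf : ∀ y, (P {ω | ξ ω ≤ y}).toReal = F y) :
    ∫ ω, Bpoly m (diracCDF (ξ ω)) x ∂P = Bpoly m F x := by
  rw [integral_Bpoly (G := fun y ω => diracCDF (ξ ω) y) (integrable_diracCDF hξ)]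
  simp only [integral_diracCDF hξ]
  exact congrArg (Bpoly m · x) (funext hcdf)

lemma variance_Bpoly_diracCDF_le (hξ : Measurable ξ)
    (hcdf : ∀ y, (P {ω | ξ ω ≤ y}).toReal = F y) (hx : x ∈ Icc (0 : ℝ) 1) :
    Var[fun ω => Bpoly m (diracCDF (ξ ω)) x; P] ≤ Bpoly m (fun y => F y * (1 - F y)) x := by
  have hmeas : ∀ y, Measurable fun ω => diracCDF (ξ ω) y :=
    fun y => (measurable_diracCDF y).comp hξ
  have hmean : ∀ y, ∫ ω, diracCDF (ξ ω) y ∂P = F y :=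
    fun y => (integral_diracCDF hξ y).trans (hcdf y)
  have hsq_int : ∀ y, Integrable (fun ω => (diracCDF (ξ ω) y - F y) ^ 2) P := fun y =>
    (memLp_of_bounded (a := -F y) (b := 1 - F y)
      (ae_of_all _ fun ω => ⟨by linarith [(diracCDF_mem_Icc (ξ ω) y).1],
        by linarith [(diracCDF_mem_Icc (ξ ω) y).2]⟩)
      ((hmeas y).sub_const _).aestronglyMeasurable 2).integrable_sq
  have hvar : ∀ y, ∫ ω, (diracCDF (ξ ω) y - F y) ^ 2 ∂P ≤ F y * (1 - F y) := fun y => by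
    rw [← hmean, ← variance_eq_integral (hmeas y).aemeasurable]
    calc _ ≤ (1 - ∫ ω, diracCDF (ξ ω) y ∂P) * (∫ ω, diracCDF (ξ ω) y ∂P - 0) :=
          variance_le_sub_mul_sub (ae_of_all _ fun ω => diracCDF_mem_Icc _ _)
            (hmeas y).aemeasurable
      _ = _ := by ring
  have hZ : Measurable fun ω => Bpoly m (diracCDF (ξ ω)) x :=
    (measurable_Bpoly_diracCDF m x).comp hξ
  rw [variance_eq_integral hZ.aemeasurable, integral_Bpoly_diracCDF hξ hcdf]
  calc ∫ ω, (Bpoly m (diracCDF (ξ ω)) x - Bpoly m F x) ^ 2 ∂P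
      ≤ ∫ ω, Bpoly m (fun y => (diracCDF (ξ ω) y - F y) ^ 2) x ∂P :=
        integral_mono_of_nonneg (ae_of_all _ fun _ => sq_nonneg _) (integrable_Bpoly hsq_int)
          (ae_of_all _ fun ω => by
            simpa only [Bpoly_sub] using sq_Bpoly_le hx fun y => diracCDF (ξ ω) y - F y)
    _ = Bpoly m (fun y => ∫ ω, (diracCDF (ξ ω) y - F y) ^ 2 ∂P) x := integral_Bpoly hsq_int
    _ ≤ _ := Bpoly_mono hx hvar

end DistributionFunction

lemma measureReal_abs_BY_sub_Bpoly_ge_le {Ω : Type*} [MeasurableSpace Ω] {P : Measure Ω}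
    [IsProbabilityMeasure P] {n : ℕ} (hn : 0 < n) {X : Fin n → Ω → ℝ}
    (hmeas : ∀ r, Measurable (X r)) (hindep : iIndepFun X P) {F : ℝ → ℝ}
    (hcdf : ∀ r y, (P {ω | X r ω ≤ y}).toReal = F y) {m : ℕ} {x : ℝ} (hx : x ∈ Icc (0 : ℝ) 1)
    {v ε : ℝ} (hv : Bpoly m (fun y => F y * (1 - F y)) x ≤ v) (hv0 : 0 < v)
    (hε : ε ∈ Icc 0 (3 / 2 * v)) :
    P.real {ω | ε ≤ |BY m n X ω x - Bpoly m F x|} ≤ 2 * exp (-(n * ε ^ 2 / (3 * v))) := by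
  have hZmeas : ∀ r, Measurable fun ω => Bpoly m (diracCDF (X r ω)) x :=
    fun r => (measurable_Bpoly_diracCDF m x).comp (hmeas r)
  have hconc := measureReal_abs_sum_sub_ge_le hZmeas
    (hindep.comp (fun _ a => Bpoly m (diracCDF a) x) fun _ => measurable_Bpoly_diracCDF m x)
    (fun _ _ => Bpoly_mem_Icc hx (diracCDF_mem_Icc _))
    (fun r => integral_Bpoly_diracCDF (hmeas r) (hcdf r))
    (fun r => (variance_Bpoly_diracCDF_le (hmeas r) (hcdf r) hx).trans hv) hv0 hε
  rw [Fintype.card_fin] at hconc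
  refine (measureReal_mono fun ω hω => ?_).trans hconc
  have hn' : (0 : ℝ) < n := Nat.cast_pos.2 hn
  simp only [Set.mem_ofPred_eq, BY_eq_sum_div] at hω ⊢
  rw [show ∑ r, Bpoly m (diracCDF (X r ω)) x - n * Bpoly m F x =
      n * ((∑ r, Bpoly m (diracCDF (X r ω)) x) / n - Bpoly m F x) by field_simp,
    abs_mul, abs_of_pos hn']
  exact mul_le_mul_of_nonneg_left hω hn'.le

lemma lAlpha_sq {α : ℝ} (hα0 : 0 < α) (hα2 : α ≤ 2) : lAlpha α ^ 2 = 3 * log (2 / α) + 1 := by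
  have hlog : log (2 * exp (1 / 3) / α) = log (2 / α) + 1 / 3 := by
    rw [mul_div_right_comm, log_mul (by positivity) (exp_pos _).ne', log_exp]
  have : 0 ≤ log (2 / α) := log_nonneg ((le_div_iff₀ hα0).2 (by linarith))
  rw [lAlpha, sq_sqrt (by rw [hlog]; linarith), hlog]
  ring

lemma lAlpha_pos {α : ℝ} (hα0 : 0 < α) (hα2 : α ≤ 2) : 0 < lAlpha α := by
  have hsq := lAlpha_sq hα0 hα2
  have : 0 ≤ log (2 / α) := log_nonneg ((le_div_iff₀ hα0).2 (by linarith))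
  refine (show 0 ≤ lAlpha α from sqrt_nonneg _).lt_of_ne' fun h => ?_
  rw [h] at hsq
  linarith

lemma two_mul_exp_neg_lAlpha_sq_le {α : ℝ} (hα0 : 0 < α) (hα2 : α ≤ 2) :
    2 * exp (-((lAlpha α ^ 2 + 1) / 3)) ≤ α := by
  calc 2 * exp (-((lAlpha α ^ 2 + 1) / 3)) = α * exp (-(2 / 3)) := by
        rw [lAlpha_sq hα0 hα2,
          show -((3 * log (2 / α) + 1 + 1) / 3) = -log (2 / α) + -(2 / 3) by ring,
          exp_add, exp_neg (log _), exp_log (by positivity), inv_div]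
        field_simp
    _ ≤ α := mul_le_of_le_one_right hα0.le (exp_le_one_iff.2 (by norm_num))

lemma radius_le_of_sq_div_le {σ2 l N : ℝ} (hσ2 : 0 < σ2) (hl : 0 < l) (hN : l ^ 2 / σ2 ≤ N) :
    (l + 1 / l) * √σ2 / √N ≤ σ2 + σ2 / l ^ 2 := by
  have hsqrt_N : l / √σ2 ≤ √N := (le_sqrt' (by positivity)).2 (by rwa [div_pow, sq_sqrt hσ2.le])
  calc (l + 1 / l) * √σ2 / √N ≤ (l + 1 / l) * √σ2 / (l / √σ2) :=
        div_le_div_of_nonneg_left (by positivity) (by positivity) hsqrt_N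
    _ = σ2 + σ2 / l ^ 2 := by
        field_simp
        rw [sq_sqrt hσ2.le]

lemma mul_radius_sq_div {σ2 l N : ℝ} (hσ2 : 0 < σ2) (hl : 0 < l) (hN : 0 < N) :
    N * ((l + 1 / l) * √σ2 / √N) ^ 2 / (3 * (σ2 + σ2 / l ^ 2)) = (l ^ 2 + 1) / 3 := by
  rw [div_pow, mul_pow, sq_sqrt hσ2.le, sq_sqrt hN.le]
  field_simp

theorem confidence_interval_for_F_general
    {Ω : Type*} [MeasurableSpace Ω] (P : Measure Ω) [IsProbabilityMeasure P]
    (n : ℕ) (X : Fin n → Ω → ℝ)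
    (hmeas : ∀ r, Measurable (X r))
    (hindep : iIndepFun X P)
    (F : ℝ → ℝ)
    (hcdf : ∀ r y, (P {ω | X r ω ≤ y}).toReal = F y)
    (hFpos : ∀ y ∈ Set.Ioo (0:ℝ) 1, 0 < F y ∧ F y < 1)
    (α : ℝ) (hα : α ∈ Set.Ioo (0:ℝ) 1)
    (x : ℝ) (hx : x ∈ Set.Ioo (0:ℝ) 1)
    (hnbig : (lAlpha α) ^ 2 / (F x * (1 - F x)) ≤ n)
    (m : ℕ)
    (hvar : |Bpoly m (fun y => F y * (1 - F y)) x - F x * (1 - F x)| ≤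
      F x * (1 - F x) / (lAlpha α) ^ 2)
    (hbias : |Bpoly m F x - F x| ≤
      Real.sqrt (F x * (1 - F x)) * lAlpha α / Real.sqrt n) :
    P {ω | |BY m n X ω x - F x| ≥
        (2 * lAlpha α + 1 / lAlpha α) * Real.sqrt (F x * (1 - F x)) / Real.sqrt n} ≤
      ENNReal.ofReal α := by
  obtain ⟨hFx0, hFx1⟩ := hFpos x hx
  have hσ2 : 0 < F x * (1 - F x) := mul_pos hFx0 (sub_pos.2 hFx1)
  have hl := lAlpha_pos hα.1 (by linarith [hα.2])
  have hn : (0 : ℝ) < n := (div_pos (pow_pos hl 2) hσ2).trans_le hnbig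
  set σ2 := F x * (1 - F x)
  set l := lAlpha α
  set ε := (l + 1 / l) * √σ2 / √n
  have hεv : ε ≤ σ2 + σ2 / l ^ 2 := radius_le_of_sq_div_le hσ2 hl hnbig
  rw [← ofReal_measureReal]
  refine ENNReal.ofReal_le_ofReal ?_
  calc P.real {ω | |BY m n X ω x - F x| ≥ (2 * l + 1 / l) * √σ2 / √n}
      ≤ P.real {ω | ε ≤ |BY m n X ω x - Bpoly m F x|} := measureReal_mono fun ω hω => by
        have := abs_sub_le (BY m n X ω x) (Bpoly m F x) (F x)
        have : (2 * l + 1 / l) * √σ2 / √n = ε + √σ2 * l / √n := by ring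
        simp only [Set.mem_ofPred_eq] at hω ⊢
        linarith
    _ ≤ 2 * exp (-(n * ε ^ 2 / (3 * (σ2 + σ2 / l ^ 2)))) :=
        measureReal_abs_BY_sub_Bpoly_ge_le (Nat.cast_pos.1 hn) hmeas hindep hcdf
          (Ioo_subset_Icc_self hx) (by linarith [(abs_le.1 hvar).2]) (by positivity)
          ⟨by positivity, by linarith [hσ2, div_pos hσ2 (pow_pos hl 2)]⟩
    _ = 2 * exp (-((l ^ 2 + 1) / 3)) := by rw [mul_radius_sq_div hσ2 hl hn]
    _ ≤ α := two_mul_exp_neg_lAlpha_sq_le hα.1 (by linarith [hα.2])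

theorem confidence_interval_for_F
    {Ω : Type*} [MeasurableSpace Ω] (P : Measure Ω) [IsProbabilityMeasure P]
    (n : ℕ) (hn : 2 ≤ n) (X : Fin n → Ω → ℝ)
    (hmeas : ∀ r, Measurable (X r))
    (hindep : iIndepFun X P)
    (hval : ∀ r ω, X r ω ∈ Set.Icc (0:ℝ) 1)
    (F : ℝ → ℝ) (hFcont : Continuous F)
    (hcdf : ∀ r y, (P {ω | X r ω ≤ y}).toReal = F y)
    (hFpos : ∀ y ∈ Set.Ioo (0:ℝ) 1, 0 < F y ∧ F y < 1)
    (α : ℝ) (hα : α ∈ Set.Ioo (0:ℝ) 1)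
    (x : ℝ) (hx : x ∈ Set.Ioo (0:ℝ) 1)
    (hnbig : (lAlpha α) ^ 2 / (F x * (1 - F x)) ≤ n)
    (m : ℕ) (hm : 1 < m)
    (hvar : |Bpoly m (fun y => F y * (1 - F y)) x - F x * (1 - F x)| ≤
      F x * (1 - F x) / (lAlpha α) ^ 2)
    (hbias : |Bpoly m F x - F x| ≤
      Real.sqrt (F x * (1 - F x)) * lAlpha α / Real.sqrt n) :
    P {ω | |BY m n X ω x - F x| ≥
        (2 * lAlpha α + 1 / lAlpha α) * Real.sqrt (F x * (1 - F x)) / Real.sqrt n} ≤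
      ENNReal.ofReal α :=
  confidence_interval_for_F_general P n X hmeas hindep F hcdf hFpos α hα x hx hnbig m hvar hbias
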